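/- Let γ > 1 and define on D = {q ∈ ℝ⁵ : q₁ > 0, q₂ > 0} the pressure p(q) = (γ−1)(q₄ − q₃²/(2q₂))/q₁ with partial derivatives ∂p/∂q₁ = −p/q₁, ∂p/∂q₂ = (γ−1)q₃²/(2q₁q₂²), ∂p/∂q₃ = −(γ−1)q₃/(q₁q₂), ∂p/∂q₄ = (γ−1)/q₁, and the 5×5 system matrix A(q) with rows: row 1 = (q₅, 0, 0, 0, 0); row 2 = (0, 0, 1, 0, 0); row 3 = (q₁∂p/∂q₁, −(q₃/q₂)² + q₁∂p/∂q₂, 2q₃/q₂ + q₁∂p/∂q₃, q₁∂p/∂q₄, 0); row 4 = ((q₃/q₂ − q₅)p + (q₁q₃/q₂)∂p/∂q₁, −q₃(q₄ + q₁p)/q₂² + (q₁q₃/q₂)∂p/∂q₂, (q₄ + q₁p)/q₂ + (q₁q₃/q₂)∂p/∂q₃, (q₃/q₂)(1 + q₁∂p/∂q₄), 0); row 5 = (0, 0, 0, 0, 0). Let Q⁻ = (0,0,0,0,u_s⁻), Q⁺ = (1, ρ⁺, m⁺, E⁺, u_s⁺) with ρ⁺ > 0, Ψ(τ) = (1−τ)Q⁻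 + τQ⁺, and p⁺ = (γ−1)(E⁺ − (m⁺)²/(2ρ⁺)). Then for every τ ∈ (0, 1], A(Ψ(τ))·(Q⁺ − Q⁻) = ( u_{s,τ}, m⁺, (m⁺)²/ρ⁺, (m⁺/ρ⁺ − u_{s,τ})·p⁺ + m⁺E⁺/ρ⁺, 0 ), where u_{s,τ} = (1−τ)u_s⁻ + τu_s⁺; i.e. the path parameter τ cancels everywhere in the path integrand except where the solid velocity occurs. -/

import Mathlib

/-!
Every entry of `A(q)` is homogeneous of degree zero in the conserved variables `q₁, …, q₄`,
and `Ψ(τ)` is `τ` times `Q⁺` in those variables, so `A(Ψ(τ))` is `A(Q⁺)` with the solid velocity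
replaced by `u_{s,τ}`. The gas flux is homogeneous of degree one, so by Euler's identity its
Jacobian at `Q⁺` maps `Q⁺` back to the flux; only the nonconservative entries `u_s` and `-u_s p`
of the `α`-column carry the solid velocity.
-/

namespace ReducedBN

noncomputable section

def pressure (γ : ℝ) (q : Fin 5 → ℝ) : ℝ := (γ - 1) * (q 3 - q 2 ^ 2 / (2 * q 1)) / q 0

def systemMatrix (γ : ℝ) (q : Fin 5 → ℝ) : Matrix (Fin 5) (Fin 5) ℝ :=
  let p := pressure γ q
  let dp1 := -p / q 0
  let dp2 := (γ - 1) * q 2 ^ 2 / (2 * q 0 * q 1 ^ 2)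
  let dp3 := -((γ - 1) * q 2 / (q 0 * q 1))
  let dp4 := (γ - 1) / q 0
  !![q 4, 0, 0, 0, 0;
     0, 0, 1, 0, 0;
     q 0 * dp1, -(q 2 / q 1) ^ 2 + q 0 * dp2, 2 * (q 2 / q 1) + q 0 * dp3, q 0 * dp4, 0;
     (q 2 / q 1 - q 4) * p + (q 0 * q 2 / q 1) * dp1,
       -(q 2 * (q 3 + q 0 * p)) / q 1 ^ 2 + (q 0 * q 2 / q 1) * dp2,
       (q 3 + q 0 * p) / q 1 + (q 0 * q 2 / q 1) * dp3, (q 2 / q 1) * (1 + q 0 * dp4), 0;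
     0, 0, 0, 0, 0]

end

theorem systemMatrix_scale (γ : ℝ) {τ : ℝ} (hτ : τ ≠ 0) (ρ m E u : ℝ) :
    systemMatrix γ ![τ, τ * ρ, τ * m, τ * E, u] = systemMatrix γ ![1, ρ, m, E, u] := by
  ext i j
  fin_cases i <;> fin_cases j <;> simp [systemMatrix, pressure] <;> field_simp; ring

theorem systemMatrix_mulVec_state (γ : ℝ) {ρ : ℝ} (hρ : ρ ≠ 0) (m E u v : ℝ) :
    (systemMatrix γ ![1, ρ, m, E, u]).mulVec ![1, ρ, m, E, v] =
      ![u, m, m ^ 2 / ρ, (m / ρ - u) * ((γ - 1) * (E - m ^ 2 / (2 * ρ))) + m * E / ρ, 0] := by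
  ext i
  fin_cases i <;> simp [systemMatrix, pressure, Matrix.mulVec, dotProduct, Fin.sum_univ_five] <;>
    field_simp <;> ring

theorem segmentPath_eq (τ a b ρ m E : ℝ) :
    (1 - τ) • ![0, 0, 0, 0, a] + τ • ![1, ρ, m, E, b] =
      ![τ, τ * ρ, τ * m, τ * E, (1 - τ) * a + τ * b] := by
  ext i
  fin_cases i <;> simp

theorem jump_eq (ρ m E a b : ℝ) : ![1, ρ, m, E, b] - ![0, 0, 0, 0, a] = ![1, ρ, m, E, b - a] := by
  ext i
  fin_cases i <;> simp

end ReducedBN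

open ReducedBN in
theorem reducedBN_RH_integrand_along_segment_path_general
    (γ : ℝ) (ρp mp Ep usm usp : ℝ) (hρp : 0 < ρp) :
    let p : (Fin 5 → ℝ) → ℝ :=
      fun q => (γ - 1) * (q 3 - (q 2) ^ 2 / (2 * q 1)) / q 0
    let dp1 : (Fin 5 → ℝ) → ℝ := fun q => -(p q) / q 0
    let dp2 : (Fin 5 → ℝ) → ℝ :=
      fun q => (γ - 1) * (q 2) ^ 2 / (2 * q 0 * (q 1) ^ 2)
    let dp3 : (Fin 5 → ℝ) → ℝ := fun q => -((γ - 1) * q 2 / (q 0 * q 1))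
    let dp4 : (Fin 5 → ℝ) → ℝ := fun q => (γ - 1) / q 0
    let A : (Fin 5 → ℝ) → Matrix (Fin 5) (Fin 5) ℝ := fun q =>
      !![q 4, 0, 0, 0, 0;
         0, 0, 1, 0, 0;
         q 0 * dp1 q, -(q 2 / q 1) ^ 2 + q 0 * dp2 q,
           2 * (q 2 / q 1) + q 0 * dp3 q, q 0 * dp4 q, 0;
         (q 2 / q 1 - q 4) * p q + (q 0 * q 2 / q 1) * dp1 q,
           -(q 2 * (q 3 + q 0 * p q)) / (q 1) ^ 2 + (q 0 * q 2 / q 1) * dp2 q,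
           (q 3 + q 0 * p q) / q 1 + (q 0 * q 2 / q 1) * dp3 q,
           (q 2 / q 1) * (1 + q 0 * dp4 q), 0;
         0, 0, 0, 0, 0]
    let Qm : Fin 5 → ℝ := ![0, 0, 0, 0, usm]
    let Qp : Fin 5 → ℝ := ![1, ρp, mp, Ep, usp]
    let Ψ : ℝ → Fin 5 → ℝ := fun τ => (1 - τ) • Qm + τ • Qp
    let pp : ℝ := (γ - 1) * (Ep - mp ^ 2 / (2 * ρp))
    ∀ τ ∈ Set.Ioc (0 : ℝ) 1,
      (A (Ψ τ)).mulVec (Qp - Qm)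
        = ![(1 - τ) * usm + τ * usp, mp, mp ^ 2 / ρp,
            (mp / ρp - ((1 - τ) * usm + τ * usp)) * pp + mp * Ep / ρp, 0] := by
  intro p dp1 dp2 dp3 dp4 A Qm Qp Ψ pp τ hτ
  change (systemMatrix γ ((1 - τ) • Qm + τ • Qp)).mulVec (Qp - Qm) = _
  rw [segmentPath_eq, jump_eq, systemMatrix_scale γ hτ.1.ne', systemMatrix_mulVec_state γ hρp.ne']

/-- Along the straight-line segment path `Ψ(τ) = (1-τ)Q⁻ + τQ⁺` from the
pure-solid state `Q⁻ = (0,0,0,0,u_s⁻)` to the pure-gas state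
`Q⁺ = (1, ρ⁺, m⁺, E⁺, u_s⁺)`, the integrand `A(Ψ(τ))·(Q⁺ - Q⁻)` of the
Dal Maso–Le Floch–Murat generalized Rankine–Hugoniot condition for the reduced
Baer–Nunziato model equals
`(u_{s,τ}, m⁺, m⁺²/ρ⁺, (m⁺/ρ⁺ - u_{s,τ})p⁺ + m⁺E⁺/ρ⁺, 0)` with
`u_{s,τ} = (1-τ)u_s⁻ + τu_s⁺`: the path parameter `τ` cancels everywhere
except where the solid velocity occurs. -/
theorem reducedBN_RH_integrand_along_segment_path
    (γ : ℝ) (hγ : 1 < γ) (ρp mp Ep usm usp : ℝ) (hρp : 0 < ρp) :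
    let p : (Fin 5 → ℝ) → ℝ :=
      fun q => (γ - 1) * (q 3 - (q 2) ^ 2 / (2 * q 1)) / q 0
    let dp1 : (Fin 5 → ℝ) → ℝ := fun q => -(p q) / q 0
    let dp2 : (Fin 5 → ℝ) → ℝ :=
      fun q => (γ - 1) * (q 2) ^ 2 / (2 * q 0 * (q 1) ^ 2)
    let dp3 : (Fin 5 → ℝ) → ℝ := fun q => -((γ - 1) * q 2 / (q 0 * q 1))
    let dp4 : (Fin 5 → ℝ) → ℝ := fun q => (γ - 1) / q 0
    let A : (Fin 5 → ℝ) → Matrix (Fin 5) (Fin 5) ℝ := fun q =>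
      !![q 4, 0, 0, 0, 0;
         0, 0, 1, 0, 0;
         q 0 * dp1 q, -(q 2 / q 1) ^ 2 + q 0 * dp2 q,
           2 * (q 2 / q 1) + q 0 * dp3 q, q 0 * dp4 q, 0;
         (q 2 / q 1 - q 4) * p q + (q 0 * q 2 / q 1) * dp1 q,
           -(q 2 * (q 3 + q 0 * p q)) / (q 1) ^ 2 + (q 0 * q 2 / q 1) * dp2 q,
           (q 3 + q 0 * p q) / q 1 + (q 0 * q 2 / q 1) * dp3 q,
           (q 2 / q 1) * (1 + q 0 * dp4 q), 0;
         0, 0, 0, 0, 0]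
    let Qm : Fin 5 → ℝ := ![0, 0, 0, 0, usm]
    let Qp : Fin 5 → ℝ := ![1, ρp, mp, Ep, usp]
    let Ψ : ℝ → Fin 5 → ℝ := fun τ => (1 - τ) • Qm + τ • Qp
    let pp : ℝ := (γ - 1) * (Ep - mp ^ 2 / (2 * ρp))
    ∀ τ ∈ Set.Ioc (0 : ℝ) 1,
      (A (Ψ τ)).mulVec (Qp - Qm)
        = ![(1 - τ) * usm + τ * usp, mp, mp ^ 2 / ρp,
            (mp / ρp - ((1 - τ) * usm + τ * usp)) * pp + mp * Ep / ρp, 0] :=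
  reducedBN_RH_integrand_along_segment_path_general γ ρp mp Ep usm usp hρp
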